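/- arXiv:1912.11492 — 3 statements merged into one kernel-verified Lean document; each statement's English description precedes it below -/
import Mathlib

section
/- Let x ∈ Δ_{n-1} and let d = ±(e_i − x) for some index i. Then ‖d‖₁ ≤ 2‖d‖, where ‖·‖ is the Euclidean norm. Consequently, for any step x' = x + α d with α ≥ 0, one has ‖x' − x‖₁ ≤ 2‖x' − x‖. -/
/-!
A Frank–Wolfe direction `d = e i - x` from a point of the simplex has coordinate sum `0` and a
single nonnegative coordinate `d i = 1 - x i`, so its positive and negative parts have equal
mass and `‖d‖₁ = 2 d i ≤ 2 ‖d‖`. Both norms are absolutely homogeneous, so the bound passes to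
the away direction `-d` and to every step `α • d`.
-/

def probSimplex (n : ℕ) : Set (EuclideanSpace ℝ (Fin n)) :=
  {x | (∀ i, 0 ≤ x i) ∧ ∑ i, x i = 1}

noncomputable def stdVec {n : ℕ} (i : Fin n) : EuclideanSpace ℝ (Fin n) :=
  EuclideanSpace.single i 1

open Finset

variable {ι : Type*} [Fintype ι]

theorem sum_abs_eq_two_mul_of_sum_eq_zero [DecidableEq ι] {f : ι → ℝ} {i : ι}
    (hsum : ∑ j, f j = 0) (hnonpos : ∀ j ≠ i, f j ≤ 0) :
    ∑ j, |f j| = 2 * f i := by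
  have hrest : ∑ j ∈ univ.erase i, |f j| = -∑ j ∈ univ.erase i, f j := by
    rw [← sum_neg_distrib]
    exact sum_congr rfl fun j hj => abs_of_nonpos (hnonpos j (ne_of_mem_erase hj))
  have hrest_nonpos : ∑ j ∈ univ.erase i, f j ≤ 0 :=
    sum_nonpos fun j hj => hnonpos j (ne_of_mem_erase hj)
  rw [← sum_erase_add _ _ (mem_univ i)] at hsum ⊢
  rw [hrest, abs_of_nonneg (by linarith)]
  linarith

theorem sum_abs_le_two_mul_norm_of_sum_eq_zero {v : EuclideanSpace ℝ ι} {i : ι}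
    (hsum : ∑ j, v j = 0) (hnonpos : ∀ j ≠ i, v j ≤ 0) :
    ∑ j, |v j| ≤ 2 * ‖v‖ := by
  classical
  rw [sum_abs_eq_two_mul_of_sum_eq_zero hsum hnonpos]
  have hvi : ‖v i‖ ≤ ‖v‖ := v.norm_apply_le i
  rw [Real.norm_eq_abs] at hvi
  linarith [le_abs_self (v i)]

theorem sum_abs_smul_le_two_mul_norm {v : EuclideanSpace ℝ ι} (hv : ∑ j, |v j| ≤ 2 * ‖v‖)
    (c : ℝ) : ∑ j, |(c • v) j| ≤ 2 * ‖c • v‖ := by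
  simp only [PiLp.smul_apply, smul_eq_mul, abs_mul, ← mul_sum, norm_smul, Real.norm_eq_abs]
  rw [mul_left_comm]
  exact mul_le_mul_of_nonneg_left hv (abs_nonneg c)

theorem sum_abs_stdVec_sub_le {n : ℕ} {x : EuclideanSpace ℝ (Fin n)} (hx : x ∈ probSimplex n)
    (i : Fin n) : ∑ j, |(stdVec i - x) j| ≤ 2 * ‖stdVec i - x‖ := by
  obtain ⟨hnonneg, hsum⟩ := hx
  refine sum_abs_le_two_mul_norm_of_sum_eq_zero (i := i) ?_ fun j hj => ?_
  · simp [stdVec, sum_sub_distrib, hsum]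
  · simpa [stdVec, hj] using hnonneg j

/-- For `x` in the simplex and `d = ±(e i − x)` (a Frank–Wolfe or away direction),
`‖d‖₁ ≤ 2‖d‖`; consequently, for any step `x' = x + α • d` with `α ≥ 0`,
`‖x' − x‖₁ ≤ 2‖x' − x‖`. -/
theorem l1_le_two_norm_of_afw_dir {n : ℕ} (x d : EuclideanSpace ℝ (Fin n))
    (hx : x ∈ probSimplex n) (i : Fin n)
    (hd : d = stdVec i - x ∨ d = -(stdVec i - x)) :
    (∑ j, |d j|) ≤ 2 * ‖d‖ ∧
      ∀ α : ℝ, 0 ≤ α → ∀ x' : EuclideanSpace ℝ (Fin n), x' = x + α • d →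
        (∑ j, |x' j - x j|) ≤ 2 * ‖x' - x‖ := by
  have hfw := sum_abs_stdVec_sub_le hx i
  obtain ⟨c, rfl⟩ : ∃ c : ℝ, d = c • (stdVec i - x) :=
    hd.elim (fun h => ⟨1, by rw [h, one_smul]⟩) fun h => ⟨-1, by rw [h, neg_one_smul]⟩
  refine ⟨sum_abs_smul_le_two_mul_norm hfw c, fun α _ x' hx' => ?_⟩
  have hstep : x' - x = (α * c) • (stdVec i - x) := by
    rw [hx', add_sub_cancel_left, smul_smul]
  simpa only [← PiLp.sub_apply, hstep] using sum_abs_smul_le_two_mul_norm hfw (α * c)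
end

section
/- Let f : Δ_{n-1} → ℝ be differentiable with L-Lipschitz gradient, x* a stationary point of f on Δ_{n-1}, and λ_i(x) = ∇f(x)ᵀ(e_i − x) the multiplier functions. Let x ∈ Δ_{n-1} with ‖x − x*‖₁ ≤ h, let O = {i : x*_i = 0, λ_i(x*) > 0, x_i = 0} and suppose O is not all indices with positive multiplier; set δ = max_{i ∉ O} λ_i(x*). Then for every index i, |λ_i(x*) − λ_i(x)| ≤ h(L + δ/2). -/
open RealInnerProductSpace

/-- Multiplier function `λ_i(x) = ∇f(x)ᵀ(e_i − x)`, given the gradient map `G`. -/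
noncomputable def mult {n : ℕ} (G : EuclideanSpace ℝ (Fin n) → EuclideanSpace ℝ (Fin n))
    (x : EuclideanSpace ℝ (Fin n)) (i : Fin n) : ℝ :=
  ⟪G x, stdVec i - x⟫

/-! Write `λ_i(x*) − λ_i(x) = ⟪∇f(x*) − ∇f(x), e_i − x⟫ + ⟪∇f(x*), x − x*⟫`. The first term is at
most `L h`, because `‖e_i − x‖_∞ ≤ 1` on the simplex. The second equals `∑ x_j λ_j(x*) ≥ 0`; by
complementary slackness only indices with `x*_j = 0` contribute, where `x_j = (x_j − x*_j)⁺`, and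
those in `O` contribute nothing, so it is at most `δ ∑ (x_j − x*_j)⁺ = δ ‖x − x*‖₁ / 2`, the last
step because `x` and `x*` have the same total mass. -/

theorem Finset.sum_posPart_eq_half_sum_abs {ι α : Type*} [Field α] [LinearOrder α]
    [IsStrictOrderedRing α] (s : Finset ι) (a : ι → α) (h : ∑ i ∈ s, a i = 0) :
    ∑ i ∈ s, (a i)⁺ = (∑ i ∈ s, |a i|) / 2 := by
  have h2 : ∀ i, 2 * (a i)⁺ = |a i| + a i := fun i => by
    linarith [posPart_add_negPart (a i), posPart_sub_negPart (a i)]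
  rw [eq_div_iff two_ne_zero, Finset.sum_mul]
  simp only [mul_comm _ (2 : α), h2, Finset.sum_add_distrib, h, add_zero]

theorem nonneg_of_sum_abs_le_mul_sum_abs {ι κ : Type*} [Fintype ι] [Fintype κ] [Nonempty ι]
    (G : EuclideanSpace ℝ ι → EuclideanSpace ℝ κ) {L : ℝ}
    (hL : ∀ x y, ∑ k, |G x k - G y k| ≤ L * ∑ i, |x i - y i|) : 0 ≤ L := by
  classical
  obtain ⟨i⟩ := ‹Nonempty ι›
  have := hL (EuclideanSpace.single i 1) 0
  simp only [PiLp.zero_apply, sub_zero, PiLp.single_apply, apply_ite, abs_one, abs_zero,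
    Finset.sum_ite_eq', Finset.mem_univ, if_true, mul_one] at this
  exact (Finset.sum_nonneg fun k _ => abs_nonneg _).trans this

section Simplex

variable {n : ℕ}

theorem stdVec_apply (i k : Fin n) : stdVec i k = if k = i then 1 else 0 :=
  PiLp.single_apply 2 ℝ i 1 k

theorem stdVec_mem_probSimplex (i : Fin n) : stdVec i ∈ probSimplex n := by
  refine ⟨fun k => ?_, ?_⟩
  · rw [stdVec_apply]; split_ifs <;> norm_num
  · simp [stdVec_apply]

theorem abs_stdVec_sub_le_one {x : EuclideanSpace ℝ (Fin n)} (hx : x ∈ probSimplex n)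
    (i k : Fin n) : |stdVec i k - x k| ≤ 1 := by
  have hxk : x k ≤ 1 := hx.2 ▸ Finset.single_le_sum (fun j _ => hx.1 j) (Finset.mem_univ k)
  have := hx.1 k
  rw [stdVec_apply, abs_le]
  split_ifs <;> constructor <;> linarith

theorem abs_inner_stdVec_sub_le {x : EuclideanSpace ℝ (Fin n)} (hx : x ∈ probSimplex n)
    (u : EuclideanSpace ℝ (Fin n)) (i : Fin n) : |⟪u, stdVec i - x⟫| ≤ ∑ k, |u k| := by
  rw [PiLp.inner_apply]
  refine (Finset.abs_sum_le_sum_abs _ _).trans (Finset.sum_le_sum fun k _ => ?_)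
  simp only [RCLike.inner_apply, conj_trivial, PiLp.sub_apply, abs_mul]
  exact mul_le_of_le_one_left (abs_nonneg _) (abs_stdVec_sub_le_one hx i k)

variable (G : EuclideanSpace ℝ (Fin n) → EuclideanSpace ℝ (Fin n))

theorem mult_sub_mult (x y : EuclideanSpace ℝ (Fin n)) (i : Fin n) :
    mult G y i - mult G x i = ⟪G y - G x, stdVec i - x⟫ + ⟪G y, x - y⟫ := by
  simp only [mult, inner_sub_left, inner_sub_right]; ring

theorem sum_mul_mult {x : EuclideanSpace ℝ (Fin n)} (hx : ∑ j, x j = 1)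
    (y : EuclideanSpace ℝ (Fin n)) : ∑ j, x j * mult G y j = ⟪G y, x - y⟫ := by
  have hmult : ∀ j, mult G y j = G y j - ⟪G y, y⟫ := fun j => by
    simp [mult, stdVec, inner_sub_right, EuclideanSpace.inner_single_right]
  simp only [hmult, mul_sub, Finset.sum_sub_distrib, ← Finset.sum_mul, hx, one_mul,
    inner_sub_right, PiLp.inner_apply, RCLike.inner_apply, conj_trivial]

section Stationary

variable {G} {xs : EuclideanSpace ℝ (Fin n)} (hxs : xs ∈ probSimplex n)
  (hstat : ∀ y ∈ probSimplex n, 0 ≤ ⟪G xs, y - xs⟫)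
include hxs hstat

theorem eq_zero_of_mult_pos {j : Fin n} (hj : 0 < mult G xs j) : xs j = 0 := by
  have hsum : ∑ k, xs k * mult G xs k = 0 := by simp [sum_mul_mult G hxs.2]
  have hterm := (Finset.sum_eq_zero_iff_of_nonneg fun k _ =>
    mul_nonneg (hxs.1 k) (hstat _ (stdVec_mem_probSimplex k))).mp hsum j (Finset.mem_univ j)
  exact (mul_eq_zero.mp hterm).resolve_right hj.ne'

theorem inner_sub_le_mul_half_sum_abs {x : EuclideanSpace ℝ (Fin n)} (hx : x ∈ probSimplex n)
    {δ : ℝ} (hδ0 : 0 ≤ δ) (hδ : ∀ j, x j ≠ 0 → mult G xs j ≤ δ) :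
    ⟪G xs, x - xs⟫ ≤ δ * ((∑ j, |x j - xs j|) / 2) := by
  have hmult (j) : 0 ≤ mult G xs j := hstat _ (stdVec_mem_probSimplex j)
  have hterm (j) : x j * mult G xs j ≤ δ * (x j - xs j)⁺ := by
    rcases (hmult j).eq_or_lt with hzero | hpos
    · rw [← hzero, mul_zero]; exact mul_nonneg hδ0 (posPart_nonneg _)
    rw [eq_zero_of_mult_pos hxs hstat hpos, sub_zero, posPart_eq_self.mpr (hx.1 j)]
    by_cases hxj : x j = 0
    · simp [hxj]
    · rw [mul_comm]; exact mul_le_mul_of_nonneg_right (hδ j hxj) (hx.1 j)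
  have hbal : ∑ j, (x j - xs j) = 0 := by simp [Finset.sum_sub_distrib, hx.2, hxs.2]
  calc ⟪G xs, x - xs⟫ = ∑ j, x j * mult G xs j := (sum_mul_mult G hx.2 xs).symm
    _ ≤ ∑ j, δ * (x j - xs j)⁺ := Finset.sum_le_sum fun j _ => hterm j
    _ = δ * ((∑ j, |x j - xs j|) / 2) := by
      rw [← Finset.mul_sum, Finset.sum_posPart_eq_half_sum_abs _ _ hbal]

end Stationary

end Simplex

theorem mult_lipschitz_bound_general {n : ℕ}
    (G : EuclideanSpace ℝ (Fin n) → EuclideanSpace ℝ (Fin n)) (L : ℝ)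
    (hL : ∀ x y, (∑ i, |G x i - G y i|) ≤ L * ∑ i, |x i - y i|)
    (xs : EuclideanSpace ℝ (Fin n)) (hxs : xs ∈ probSimplex n)
    (hstat : ∀ y ∈ probSimplex n, 0 ≤ ⟪G xs, y - xs⟫)
    (x : EuclideanSpace ℝ (Fin n)) (hx : x ∈ probSimplex n)
    (h : ℝ) (hdist : (∑ i, |x i - xs i|) ≤ h)
    (O : Set (Fin n)) (hO : O = {i | xs i = 0 ∧ 0 < mult G xs i ∧ x i = 0})
    (δ : ℝ) (hδ : IsGreatest {v | ∃ i ∉ O, v = mult G xs i} δ) :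
    ∀ i, |mult G xs i - mult G x i| ≤ h * (L + δ / 2) := by
  intro i
  have : Nonempty (Fin n) := ⟨i⟩
  have hL0 : 0 ≤ L := nonneg_of_sum_abs_le_mul_sum_abs G hL
  have hgrad : |⟪G xs - G x, stdVec i - x⟫| ≤ L * h :=
    calc |⟪G xs - G x, stdVec i - x⟫| ≤ ∑ k, |G xs k - G x k| := abs_inner_stdVec_sub_le hx _ i
      _ ≤ L * ∑ k, |x k - xs k| := by simpa only [abs_sub_comm (xs _)] using hL xs x
      _ ≤ L * h := mul_le_mul_of_nonneg_left hdist hL0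
  have hδ0 : 0 ≤ δ := by
    obtain ⟨j, -, rfl⟩ := hδ.1
    exact hstat _ (stdVec_mem_probSimplex j)
  have hδO (j) (hj : x j ≠ 0) : mult G xs j ≤ δ := hδ.2 ⟨j, fun hjO => hj (hO ▸ hjO).2.2, rfl⟩
  have hslack : ⟪G xs, x - xs⟫ ≤ δ * (h / 2) :=
    (inner_sub_le_mul_half_sum_abs hxs hstat hx hδ0 hδO).trans
      (mul_le_mul_of_nonneg_left (by linarith) hδ0)
  calc |mult G xs i - mult G x i| = |⟪G xs - G x, stdVec i - x⟫ + ⟪G xs, x - xs⟫| := by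
        rw [mult_sub_mult]
    _ ≤ |⟪G xs - G x, stdVec i - x⟫| + ⟪G xs, x - xs⟫ := by
        grw [abs_add_le, abs_of_nonneg (hstat x hx)]
    _ ≤ h * (L + δ / 2) := by linarith

/-- Lipschitz-type bound for the multiplier functions near a stationary point:
if `‖x − x*‖₁ ≤ h`, `O = {i : x*_i = 0, λ_i(x*) > 0, x_i = 0}`, `O` is not all of
`I^c = {i : λ_i(x*) > 0}`, and `δ = max_{i ∉ O} λ_i(x*)`, then
`|λ_i(x*) − λ_i(x)| ≤ h (L + δ/2)` for every `i`. -/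
theorem mult_lipschitz_bound {n : ℕ} (f : EuclideanSpace ℝ (Fin n) → ℝ)
    (G : EuclideanSpace ℝ (Fin n) → EuclideanSpace ℝ (Fin n))
    (hG : ∀ x, HasGradientAt f (G x) x) (L : ℝ)
    (hL : ∀ x y, (∑ i, |G x i - G y i|) ≤ L * ∑ i, |x i - y i|)
    (xs : EuclideanSpace ℝ (Fin n)) (hxs : xs ∈ probSimplex n)
    (hstat : ∀ y ∈ probSimplex n, 0 ≤ ⟪G xs, y - xs⟫)
    (x : EuclideanSpace ℝ (Fin n)) (hx : x ∈ probSimplex n)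
    (h : ℝ) (hdist : (∑ i, |x i - xs i|) ≤ h)
    (O : Set (Fin n)) (hO : O = {i | xs i = 0 ∧ 0 < mult G xs i ∧ x i = 0})
    (hOne : O ≠ {i | 0 < mult G xs i})
    (δ : ℝ) (hδ : IsGreatest {v | ∃ i ∉ O, v = mult G xs i} δ) :
    ∀ i, |mult G xs i - mult G x i| ≤ h * (L + δ / 2) :=
  mult_lipschitz_bound_general G L hL xs hxs hstat x hx h hdist O hO δ hδ
end

section
/- Let x, x* ∈ Δ_{n-1} with ‖x − x*‖₁ ≤ h, and suppose x_j = x*_j = 0 for all j in some index set O. Then |∇f(x*)ᵀ(x* − x)| ≤ (h/2)·(max_{j∉O} ∇f(x*)_j − min_{j∉O} ∇f(x*)_j). -/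
open RealInnerProductSpace

/-! Since `x* − x` has coordinates summing to zero, `gᵀ(x* − x)` does not change when every
coordinate of `g` is shifted by the midpoint `c = (M + m)/2`. Off `O` the shifted coordinates
satisfy `|g_j − c| ≤ (M − m)/2`, and on `O` the difference vanishes, so the triangle inequality
bounds it by `(M − m)/2 · ‖x* − x‖₁ ≤ h/2 · (M − m)`. -/

lemma abs_sub_midpoint_le {a m M : ℝ} (ha : a ∈ Set.Icc m M) :
    |a - (M + m) / 2| ≤ (M - m) / 2 := by
  rw [abs_le]
  constructor <;> linarith [ha.1, ha.2]

lemma Finset.sum_mul_sub_const_of_sum_eq_zero {ι : Type*} (s : Finset ι) (g d : ι → ℝ)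
    (hd : ∑ i ∈ s, d i = 0) (c : ℝ) :
    ∑ i ∈ s, g i * d i = ∑ i ∈ s, (g i - c) * d i := by
  simp only [sub_mul, Finset.sum_sub_distrib, ← Finset.mul_sum, hd, mul_zero, sub_zero]

lemma Finset.abs_sum_mul_le_of_sum_eq_zero {ι : Type*} (s : Finset ι) (g d : ι → ℝ)
    {m M : ℝ} (hd : ∑ i ∈ s, d i = 0) (hg : ∀ i ∈ s, d i ≠ 0 → g i ∈ Set.Icc m M) :
    |∑ i ∈ s, g i * d i| ≤ (M - m) / 2 * ∑ i ∈ s, |d i| := by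
  rw [s.sum_mul_sub_const_of_sum_eq_zero g d hd ((M + m) / 2), Finset.mul_sum]
  refine (Finset.abs_sum_le_sum_abs _ _).trans (Finset.sum_le_sum fun i hi => ?_)
  rw [abs_mul]
  by_cases hdi : d i = 0
  · simp [hdi]
  · exact mul_le_mul_of_nonneg_right (abs_sub_midpoint_le (hg i hi hdi)) (abs_nonneg _)

/-- If `x, x*` lie in the probability simplex with `‖x − x*‖₁ ≤ h` and both vanish on an
index set `O`, then `|gᵀ(x* − x)| ≤ (h/2)(max_{j∉O} g_j − min_{j∉O} g_j)` for any vector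
`g` (in the paper, `g = ∇f(x*)`). -/
theorem inner_bound_on_common_zero {n : ℕ} (x xs : EuclideanSpace ℝ (Fin n))
    (hx : x ∈ probSimplex n) (hxs : xs ∈ probSimplex n)
    (h : ℝ) (hdist : (∑ i, |x i - xs i|) ≤ h)
    (O : Set (Fin n)) (hO : ∀ j ∈ O, x j = 0 ∧ xs j = 0)
    (g : EuclideanSpace ℝ (Fin n)) (M m : ℝ)
    (hM : IsGreatest {v | ∃ j ∉ O, v = g j} M)
    (hm : IsLeast {v | ∃ j ∉ O, v = g j} m) :
    |⟪g, xs - x⟫| ≤ h / 2 * (M - m) := by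
  have hinner : ⟪g, xs - x⟫ = ∑ i, g i * (xs i - x i) := by
    simp [PiLp.inner_apply, mul_comm]
  have hsum : ∑ i, (xs i - x i) = 0 := by
    rw [Finset.sum_sub_distrib, hxs.2, hx.2, sub_self]
  have hg : ∀ i ∈ Finset.univ, xs i - x i ≠ 0 → g i ∈ Set.Icc m M := by
    intro i _ hi
    have hiO : i ∉ O := fun hiO => hi (by simp [(hO i hiO).1, (hO i hiO).2])
    exact ⟨hm.2 ⟨i, hiO, rfl⟩, hM.2 ⟨i, hiO, rfl⟩⟩
  have hmM : 0 ≤ (M - m) / 2 := by linarith [hm.2 hM.1]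
  calc |⟪g, xs - x⟫| ≤ (M - m) / 2 * ∑ i, |xs i - x i| := by
        rw [hinner]; exact Finset.univ.abs_sum_mul_le_of_sum_eq_zero _ _ hsum hg
    _ ≤ (M - m) / 2 * h := by
        simp only [abs_sub_comm (xs _)]; exact mul_le_mul_of_nonneg_left hdist hmM
    _ = h / 2 * (M - m) := by ring
end
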